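/- Let 0 < ȳ_min < ȳ_max, λ ≥ 0, T > 0, and suppose that ȳ_min ≤ λ ξ_T(τ) ≤ ȳ_max for all τ ∈ [0, T]. If moreover λ ≤ λ_max and T ≥ T_min for some constants λ_max and T_min > 0, then λ_max ≥ (a₂a₃/(g₁g₂)) · ȳ_min · (1 − e^{−a₁T_min}). -/

import Mathlib

open Matrix

/-- The system matrix of the third-order PK model. -/
noncomputable def Amat (a₁ a₂ a₃ g₁ g₂ : ℝ) : Matrix (Fin 3) (Fin 3) ℝ :=
  !![-a₁, 0, 0; g₁, -a₂, 0; 0, g₂, -a₃]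

/-- The input vector `B = (1,0,0)ᵀ`. -/
noncomputable def Bvec : Fin 3 → ℝ := ![1, 0, 0]

/-- The output map `C x = x₃`. -/
noncomputable def Cout (x : Fin 3 → ℝ) : ℝ := x 2

/-- `ξ_T(τ) = C e^{τA} (I − e^{TA})⁻¹ B`, the output at phase `τ` of the 1-cycle
with unit dose and inter-dose interval `T`. -/
noncomputable def xi (a₁ a₂ a₃ g₁ g₂ : ℝ) (T τ : ℝ) : ℝ :=
  Cout ((NormedSpace.exp (τ • Amat a₁ a₂ a₃ g₁ g₂) *
    (1 - NormedSpace.exp (T • Amat a₁ a₂ a₃ g₁ g₂))⁻¹).mulVec Bvec)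

/-! The row vector `c = C A⁻¹` satisfies `c A = C`, so `τ ↦ c e^{τA} (I − e^{TA})⁻¹ B` is a
primitive of `ξ_T`. Its increment over one period is `c (e^{TA} − I)(I − e^{TA})⁻¹ B = −c B`,
which equals `g₁g₂/(a₁a₂a₃)`. By the mean value theorem `ξ_T` takes the value
`g₁g₂/(a₁a₂a₃T)` somewhere in `(0, T)`, and the lower corridor bound there gives
`λ ≥ ȳ_min a₁a₂a₃ T/(g₁g₂)`. Conclude with `1 − e^{−a₁T_min} ≤ a₁T_min ≤ a₁T`. -/

section PeriodicOutput

variable {ι : Type*} [Fintype ι] [DecidableEq ι]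

attribute [local instance] Matrix.linftyOpNormedAddCommGroup Matrix.linftyOpNormedRing
  Matrix.linftyOpNormedAlgebra

noncomputable def periodicOutput (A : Matrix ι ι ℝ) (T : ℝ) (C B : ι → ℝ) (τ : ℝ) : ℝ :=
  C ⬝ᵥ (NormedSpace.exp (τ • A) * (1 - NormedSpace.exp (T • A))⁻¹) *ᵥ B

theorem periodicOutput_of_not_isUnit {A : Matrix ι ι ℝ} {T : ℝ}
    (h : ¬IsUnit (1 - NormedSpace.exp (T • A)).det) (C B : ι → ℝ) (τ : ℝ) :
    periodicOutput A T C B τ = 0 := by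
  simp [periodicOutput, nonsing_inv_apply_not_isUnit _ h]

theorem hasDerivAt_periodicOutput (A : Matrix ι ι ℝ) (T : ℝ) (c B : ι → ℝ) (t : ℝ) :
    HasDerivAt (periodicOutput A T c B) (periodicOutput A T (c ᵥ* A) B t) t := by
  set M := (1 - NormedSpace.exp (T • A))⁻¹
  let L : Matrix ι ι ℝ →L[ℝ] ℝ := LinearMap.toContinuousLinearMap
    { toFun := fun N => c ⬝ᵥ (N * M) *ᵥ B
      map_add' := fun N N' => by simp [Matrix.add_mul, Matrix.add_mulVec, dotProduct_add]
      map_smul' := fun r N => by simp [Matrix.smul_mulVec] }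
  have hL := L.hasFDerivAt.comp_hasDerivAt t (hasDerivAt_exp_smul_const' (𝕂 := ℝ) A t)
  refine hL.congr_deriv ?_
  change c ⬝ᵥ ((A * NormedSpace.exp (t • A)) * M) *ᵥ B = (c ᵥ* A) ⬝ᵥ _
  rw [dotProduct_mulVec, dotProduct_mulVec, mul_assoc, ← vecMul_vecMul]

theorem sub_one_mul_nonsing_inv_one_sub {R : Type*} [CommRing R] {E : Matrix ι ι R}
    (h : IsUnit (1 - E).det) : (E - 1) * (1 - E)⁻¹ = -1 := by
  rw [← neg_sub, neg_mul, mul_nonsing_inv _ h]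

theorem periodicOutput_period_sub_zero {A : Matrix ι ι ℝ} {T : ℝ}
    (h : IsUnit (1 - NormedSpace.exp (T • A)).det) (c B : ι → ℝ) :
    periodicOutput A T c B T - periodicOutput A T c B 0 = -(c ⬝ᵥ B) := by
  simp only [periodicOutput, zero_smul, NormedSpace.exp_zero, one_mul]
  have hinc : NormedSpace.exp (T • A) * (1 - NormedSpace.exp (T • A))⁻¹
      - (1 - NormedSpace.exp (T • A))⁻¹ = -1 := by
    rw [← sub_one_mul_nonsing_inv_one_sub h, sub_mul, one_mul]
  rw [← dotProduct_sub, ← sub_mulVec, hinc, neg_mulVec, one_mulVec, dotProduct_neg]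

theorem exists_periodicOutput_vecMul_eq_mean {A : Matrix ι ι ℝ} {T : ℝ} (hT : 0 < T)
    (h : IsUnit (1 - NormedSpace.exp (T • A)).det) (c B : ι → ℝ) :
    ∃ τ ∈ Set.Ioo 0 T, periodicOutput A T (c ᵥ* A) B τ = -(c ⬝ᵥ B) / T := by
  have hderiv := hasDerivAt_periodicOutput A T c B
  obtain ⟨τ, hτ, hslope⟩ := exists_hasDerivAt_eq_slope _ _ hT
    (fun t _ => (hderiv t).continuousAt.continuousWithinAt) (fun t _ => hderiv t)
  refine ⟨τ, hτ, ?_⟩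
  rw [hslope, periodicOutput_period_sub_zero h, sub_zero]

end PeriodicOutput

theorem xi_eq_periodicOutput (a₁ a₂ a₃ g₁ g₂ T τ : ℝ) :
    xi a₁ a₂ a₃ g₁ g₂ T τ = periodicOutput (Amat a₁ a₂ a₃ g₁ g₂) T ![0, 0, 1] Bvec τ := by
  simp [xi, Cout, periodicOutput, dotProduct, Fin.sum_univ_three]

noncomputable def primitiveRow (a₁ a₂ a₃ g₁ g₂ : ℝ) : Fin 3 → ℝ :=
  ![-(g₁ * g₂ / (a₁ * a₂ * a₃)), -(g₂ / (a₂ * a₃)), -(1 / a₃)]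

theorem primitiveRow_vecMul_Amat {a₁ a₂ a₃ : ℝ} (ha₁ : a₁ ≠ 0) (ha₂ : a₂ ≠ 0) (ha₃ : a₃ ≠ 0)
    (g₁ g₂ : ℝ) : primitiveRow a₁ a₂ a₃ g₁ g₂ ᵥ* Amat a₁ a₂ a₃ g₁ g₂ = ![0, 0, 1] := by
  ext j
  fin_cases j <;> simp [primitiveRow, Amat, vecMul, dotProduct, Fin.sum_univ_three] <;>
    field_simp <;> ring

theorem primitiveRow_dotProduct_Bvec (a₁ a₂ a₃ g₁ g₂ : ℝ) :
    primitiveRow a₁ a₂ a₃ g₁ g₂ ⬝ᵥ Bvec = -(g₁ * g₂ / (a₁ * a₂ * a₃)) := by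
  simp [primitiveRow, Bvec, dotProduct, Fin.sum_univ_three]

theorem exists_xi_eq_mean {a₁ a₂ a₃ : ℝ} (ha₁ : a₁ ≠ 0) (ha₂ : a₂ ≠ 0) (ha₃ : a₃ ≠ 0)
    (g₁ g₂ : ℝ) {T : ℝ} (hT : 0 < T)
    (h : IsUnit (1 - NormedSpace.exp (T • Amat a₁ a₂ a₃ g₁ g₂)).det) :
    ∃ τ ∈ Set.Ioo 0 T, xi a₁ a₂ a₃ g₁ g₂ T τ = g₁ * g₂ / (a₁ * a₂ * a₃) / T := by
  obtain ⟨τ, hτ, hmean⟩ := exists_periodicOutput_vecMul_eq_mean hT h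
    (primitiveRow a₁ a₂ a₃ g₁ g₂) Bvec
  rw [primitiveRow_vecMul_Amat ha₁ ha₂ ha₃, primitiveRow_dotProduct_Bvec, neg_neg] at hmean
  exact ⟨τ, hτ, by rw [xi_eq_periodicOutput, hmean]⟩

theorem necessary_dose_bound_lamMax
    (a₁ a₂ a₃ g₁ g₂ : ℝ)
    (ha₁ : 0 < a₁) (ha₂ : 0 < a₂) (ha₃ : 0 < a₃) (hg₁ : 0 < g₁) (hg₂ : 0 < g₂)
    (ymin ymax lam T lamMax Tmin : ℝ)
    (hymin : 0 < ymin) (hT : 0 < T)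
    (hcorridor : ∀ τ ∈ Set.Icc (0 : ℝ) T,
      ymin ≤ lam * xi a₁ a₂ a₃ g₁ g₂ T τ ∧ lam * xi a₁ a₂ a₃ g₁ g₂ T τ ≤ ymax)
    (hlamMax : lam ≤ lamMax) (hTge : Tmin ≤ T) :
    a₂ * a₃ / (g₁ * g₂) * ymin * (1 - Real.exp (-a₁ * Tmin)) ≤ lamMax := by
  -- A singular `I − e^{TA}` would make the junk inverse `0`, so `ξ_T ≡ 0`.
  have hunit : IsUnit (1 - NormedSpace.exp (T • Amat a₁ a₂ a₃ g₁ g₂)).det := by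
    by_contra hsing
    have h0 := (hcorridor 0 ⟨le_rfl, hT.le⟩).1
    rw [xi_eq_periodicOutput, periodicOutput_of_not_isUnit hsing, mul_zero] at h0
    linarith
  obtain ⟨τ, hτ, hmean⟩ := exists_xi_eq_mean ha₁.ne' ha₂.ne' ha₃.ne' g₁ g₂ hT hunit
  have hlam : ymin * T * (a₁ * a₂ * a₃) / (g₁ * g₂) ≤ lam := by
    have hy := (hcorridor τ (Set.Ioo_subset_Icc_self hτ)).1
    rw [hmean] at hy
    rw [div_le_iff₀ (by positivity)]
    calc ymin * T * (a₁ * a₂ * a₃)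
        ≤ lam * (g₁ * g₂ / (a₁ * a₂ * a₃) / T) * T * (a₁ * a₂ * a₃) := by gcongr
      _ = lam * (g₁ * g₂) := by field_simp
  have hexp : 1 - Real.exp (-a₁ * Tmin) ≤ a₁ * T := by
    rw [neg_mul]
    linarith [Real.one_sub_le_exp_neg (a₁ * Tmin), mul_le_mul_of_nonneg_left hTge ha₁.le]
  calc a₂ * a₃ / (g₁ * g₂) * ymin * (1 - Real.exp (-a₁ * Tmin))
      ≤ a₂ * a₃ / (g₁ * g₂) * ymin * (a₁ * T) := by gcongr
    _ = ymin * T * (a₁ * a₂ * a₃) / (g₁ * g₂) := by ring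
    _ ≤ lamMax := hlam.trans hlamMax
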